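/- For each integer k ≥ 3, let φ_k(z) = z^k (identifying ℝ² with ℂ), which is the harmonic extension of e^{ikθ}. Then A^{φ_k} = ((k³ − 2k² − k + 2)/2) φ_k, where A^φ(z) = φ − z₁∂₁φ − z₂∂₂φ + z₁z₂[∂₁₂φ − z₂∂₁₁₁φ + z₁∂₂₁₁φ] + (1/2)(z₁²−z₂²)[∂₁₁φ + z₂∂₁₁₂φ + z₁∂₁₁₁φ]. -/

import Mathlib

noncomputable section

/-- Real partial derivative of a function on ℂ in the direction 1. -/
def cd1 (f : ℂ → ℂ) (z : ℂ) : ℂ := fderiv ℝ f z 1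

/-- Real partial derivative of a function on ℂ in the direction i. -/
def cd2 (f : ℂ → ℂ) (z : ℂ) : ℂ := fderiv ℝ f z Complex.I

/-- The coefficient `A^φ` for a (complex-valued) function on ℂ ≅ ℝ². -/
def AentC (φ : ℂ → ℂ) (z : ℂ) : ℂ :=
  φ z - (z.re : ℂ) * cd1 φ z - (z.im : ℂ) * cd2 φ z
    + (z.re : ℂ) * (z.im : ℂ) * (cd1 (cd2 φ) z
        - (z.im : ℂ) * cd1 (cd1 (cd1 φ)) z + (z.re : ℂ) * cd2 (cd1 (cd1 φ)) z)
    + (1 / 2) * ((z.re : ℂ) ^ 2 - (z.im : ℂ) ^ 2) * (cd1 (cd1 φ) z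
        + (z.im : ℂ) * cd1 (cd1 (cd2 φ)) z + (z.re : ℂ) * cd1 (cd1 (cd1 φ)) z)

/-! For holomorphic `φ` the real partials are `∂₁φ = φ'` and `∂₂φ = i φ'`, so every
combination `z₁ + i z₂` in `A^φ` collapses to `z` and
`A^φ = φ - z φ' + (z² φ'' + z³ φ''') / 2`. For `φ = z^k` the Euler identities
`z^j φ⁽ʲ⁾ = k (k-1) ⋯ (k-j+1) z^k` then give `A^φ = (1 - k + k (k-1)² / 2) z^k`. -/

open Complex

theorem cd1_eq_deriv {f : ℂ → ℂ} (hf : Differentiable ℂ f) : cd1 f = deriv f :=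
  funext fun z => by simp [cd1, (hf z).fderiv_restrictScalars ℝ]

theorem cd2_eq_I_mul_deriv {f : ℂ → ℂ} (hf : Differentiable ℂ f) :
    cd2 f = fun z => I * deriv f z :=
  funext fun z => by simp [cd2, (hf z).fderiv_restrictScalars ℝ]

theorem cd1_const_mul {f : ℂ → ℂ} (hf : Differentiable ℂ f) (c : ℂ) :
    cd1 (fun z => c * f z) = fun z => c * deriv f z := by
  rw [cd1_eq_deriv (hf.const_mul c)]
  exact funext fun z => deriv_const_mul c (hf z)

theorem AentC_eq_of_differentiable {f : ℂ → ℂ} (hf : Differentiable ℂ f) (z : ℂ) :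
    AentC f z = f z - z * deriv f z
      + (z ^ 2 * deriv^[2] f z + z ^ 3 * deriv^[3] f z) / 2 := by
  have hf' := hf.deriv
  have hf'' := hf'.deriv
  simp only [AentC, cd1_eq_deriv hf, cd1_eq_deriv hf', cd1_eq_deriv hf'', cd2_eq_I_mul_deriv hf,
    cd2_eq_I_mul_deriv hf'', cd1_const_mul hf', cd1_const_mul hf'', Function.iterate_succ_apply',
    Function.iterate_zero_apply]
  set w : ℂ := z.re + z.im * I
  have hw : w = z := re_add_im z
  linear_combination
    (-deriv f z + deriv (deriv f) z * (z + w) / 2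
        + deriv (deriv (deriv f)) z * (z ^ 2 + z * w + w ^ 2) / 2) * hw
      - (z.im ^ 2 * deriv (deriv f) z
        + deriv (deriv (deriv f)) z * (3 * z.re * z.im ^ 2 + z.im ^ 3 * I)) / 2 * I_sq

theorem pow_mul_iter_deriv_pow (j n : ℕ) (z : ℂ) :
    z ^ j * deriv^[j] (fun w => w ^ n) z = (∏ i ∈ Finset.range j, ((n : ℂ) - i)) * z ^ n := by
  rw [iter_deriv_pow]
  rcases le_or_gt j n with hjn | hnj
  · rw [mul_left_comm, pow_mul_pow_sub z hjn]
  · rw [Finset.prod_eq_zero (Finset.mem_range.2 hnj) (sub_self _)]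
    simp

theorem stmt13_general (k : ℕ) (z : ℂ) :
    AentC (fun w => w ^ k) z
      = (((k : ℂ) ^ 3 - 2 * (k : ℂ) ^ 2 - (k : ℂ) + 2) / 2) * z ^ k := by
  have h1 : z * deriv (fun w => w ^ k) z = k * z ^ k := by
    simpa using pow_mul_iter_deriv_pow 1 k z
  have h2 := pow_mul_iter_deriv_pow 2 k z
  have h3 := pow_mul_iter_deriv_pow 3 k z
  simp only [Finset.prod_range_succ, Finset.prod_range_zero, one_mul, Nat.cast_zero, Nat.cast_one,
    Nat.cast_ofNat, sub_zero] at h2 h3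
  rw [AentC_eq_of_differentiable (differentiable_pow k)]
  linear_combination -h1 + h2 / 2 + h3 / 2

theorem stmt13 (k : ℕ) (hk : 3 ≤ k) (z : ℂ) :
    AentC (fun w => w ^ k) z
      = (((k : ℂ) ^ 3 - 2 * (k : ℂ) ^ 2 - (k : ℂ) + 2) / 2) * z ^ k :=
  stmt13_general k z
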